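/- arXiv:1501.04433 — 3 statements merged into one kernel-verified Lean document; each statement's English description precedes it below -/
import Mathlib

section
/- Let i, j > 0 be real numbers with i + j = 1, and let x = (x_1, x_2) ∈ [0,1)^2 belong to Bad(i,j). Then the set Bad_x(i,j) = { (α_1, α_2) ∈ [0,1)^2 : inf_{q ∈ ℤ, q ≠ 0} max( |q|^i ‖q x_1 − α_1‖, |q|^j ‖q x_2 − α_2‖ ) > 0 } has full Hausdorff dimension 2. (In the paper this is the special case n = 2, m = 1 of Theorem 1, where it is asserted that Bad_x(i,j) is 1/2-winning.) -/
/-!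
Assume `i ≤ j` (otherwise swap the coordinates). For `q ≠ 0`, a point avoiding the rectangle of
width `e |q|^(-i)` and height `e |q|^(-j)` around `(q x₁, q x₂)` modulo `ℤ²` satisfies the twisted
inequality for `q` with constant `e`. Build a Cantor set by splitting squares of side
`δ l = R^(-l) / 4` into `R × R` subsquares and keeping those in even columns and in `m` good even
rows. At level `l` only the `q` whose rectangle height lies in `(δ (l+2), δ (l+1)]` matter. For
two of them meeting a common square, `x ∈ Bad(i,j)` applied to `q₁ - q₂` cannot give a small
`‖(q₁ - q₂) x₂‖` (both rectangles meet the square), so it keeps `q₁ x₁` and `q₂ x₁` apart modulo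
`1`; hence at most two such `q` meet a square, and each of them hits at most two even rows. The
Cantor set maps onto the unit square by a Hölder map of exponent `log m / log R`, so its dimension
is at least `2 log m / log R`, which tends to `2` along `m = 2^(k+1)`, `R = 2^(k+4)`.
-/

/-- Distance from a real number to the nearest integer. -/
noncomputable def dni (x : ℝ) : ℝ := |x - round x|

open Set Filter Topology
open scoped NNReal ENNReal

lemma dni_le_abs_sub_intCast (x : ℝ) (n : ℤ) : dni x ≤ |x - n| := round_le x n

lemma dni_le_abs (x : ℝ) : dni x ≤ |x| := by
  simpa using dni_le_abs_sub_intCast x 0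

lemma dni_add_le (x y : ℝ) : dni (x + y) ≤ dni x + dni y :=
  calc dni (x + y) ≤ |x + y - ((round x + round y : ℤ) : ℝ)| := dni_le_abs_sub_intCast _ _
    _ = |(x - round x) + (y - round y)| := by push_cast; ring_nf
    _ ≤ dni x + dni y := abs_add_le _ _

lemma dni_sub_le (x y : ℝ) : dni (x - y) ≤ dni x + dni y :=
  calc dni (x - y) ≤ |x - y - ((round x - round y : ℤ) : ℝ)| := dni_le_abs_sub_intCast _ _
    _ = |(x - round x) - (y - round y)| := by push_cast; ring_nf
    _ ≤ dni x + dni y := abs_sub _ _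

lemma abs_sub_lt_of_dni_lt {u v η : ℝ} (hu : dni u < η) (hv : dni v < η)
    (huv : |u - v| < 1 - 2 * η) : |u - v| < 2 * η := by
  have hround : round u = round v := by
    have hlt : |((round u - round v : ℤ) : ℝ)| < 1 :=
      calc |((round u - round v : ℤ) : ℝ)| = |(u - v) - (u - round u) + (v - round v)| := by
            push_cast; ring_nf
        _ ≤ |u - v| + dni u + dni v := abs_add_three _ _ _ |>.trans (by simp [dni, abs_sub_comm])
        _ < 1 := by linarith
    exact_mod_cast sub_eq_zero.1 (Int.abs_lt_one_iff.1 (by exact_mod_cast hlt))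
  calc |u - v| = |(u - round u) - (v - round v)| := by rw [hround]; ring_nf
    _ ≤ dni u + dni v := abs_sub _ _
    _ < 2 * η := by linarith

namespace Real

theorem ofDigits_mem_Icc {b : ℕ} (a : ℕ → Fin b) (n : ℕ) :
    ofDigits a ∈ Icc (∑ i ∈ Finset.range n, ofDigitsTerm a i)
      ((∑ i ∈ Finset.range n, ofDigitsTerm a i) + ((b : ℝ) ^ n)⁻¹) := by
  rw [ofDigits_eq_sum_add_ofDigits a n]
  have h0 := ofDigits_nonneg (fun i ↦ a (i + n))
  have h1 := ofDigits_le_one (fun i ↦ a (i + n))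
  constructor
  · have : 0 ≤ ((b : ℝ) ^ n)⁻¹ * ofDigits (fun i ↦ a (i + n)) := by positivity
    linarith
  · have : ((b : ℝ) ^ n)⁻¹ * ofDigits (fun i ↦ a (i + n)) ≤ ((b : ℝ) ^ n)⁻¹ :=
      mul_le_of_le_one_right (by positivity) h1
    linarith

/-- The tails after place `n` can make up for a difference of one unit at place `n` only. -/
theorem inv_pow_succ_le_abs_ofDigits_sub {b : ℕ} {x y : ℕ → Fin b} {n : ℕ}
    (hxy : ∀ i < n, x i = y i) (hn : 2 ≤ |((x n : ℕ) : ℝ) - (y n : ℕ)|) :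
    ((b : ℝ) ^ (n + 1))⁻¹ ≤ |ofDigits x - ofDigits y| := by
  have hsum : ∑ i ∈ Finset.range (n + 1), ofDigitsTerm x i -
      ∑ i ∈ Finset.range (n + 1), ofDigitsTerm y i =
      (((x n : ℕ) : ℝ) - (y n : ℕ)) * ((b : ℝ) ^ (n + 1))⁻¹ := by
    have hpre : ∑ i ∈ Finset.range n, ofDigitsTerm x i = ∑ i ∈ Finset.range n, ofDigitsTerm y i :=
      Finset.sum_congr rfl fun i hi ↦ by simp [ofDigitsTerm, hxy i (Finset.mem_range.1 hi)]
    rw [Finset.sum_range_succ, Finset.sum_range_succ, hpre]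
    simp only [ofDigitsTerm]
    ring
  have hx := ofDigits_mem_Icc x (n + 1)
  have hy := ofDigits_mem_Icc y (n + 1)
  set u := ((b : ℝ) ^ (n + 1))⁻¹
  have hu : 0 < u := by
    have : 0 < b := Fin.pos (x 0)
    positivity
  have hlead : 2 * u ≤ |(((x n : ℕ) : ℝ) - (y n : ℕ)) * u| := by
    rw [abs_mul, abs_of_pos hu]
    nlinarith
  have htail : |(((x n : ℕ) : ℝ) - (y n : ℕ)) * u - (ofDigits x - ofDigits y)| ≤ u := by
    rw [← hsum, abs_le]
    constructor <;> linarith [hx.1, hx.2, hy.1, hy.2]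
  linarith [abs_sub_abs_le_abs_sub ((((x n : ℕ) : ℝ) - (y n : ℕ)) * u) (ofDigits x - ofDigits y)]

end Real

lemma two_mul_le_of_three_separated {a b s u₁ u₂ u₃ : ℝ} (h₁ : u₁ ∈ Icc a b)
    (h₂ : u₂ ∈ Icc a b) (h₃ : u₃ ∈ Icc a b) (h₁₂ : s ≤ |u₁ - u₂|)
    (h₁₃ : s ≤ |u₁ - u₃|) (h₂₃ : s ≤ |u₂ - u₃|) : 2 * s ≤ b - a := by
  obtain ⟨h₁, h₁'⟩ := h₁
  obtain ⟨h₂, h₂'⟩ := h₂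
  obtain ⟨h₃, h₃'⟩ := h₃
  rcases abs_cases (u₁ - u₂) with ⟨e₁₂, -⟩ | ⟨e₁₂, -⟩ <;>
  rcases abs_cases (u₁ - u₃) with ⟨e₁₃, -⟩ | ⟨e₁₃, -⟩ <;>
  rcases abs_cases (u₂ - u₃) with ⟨e₂₃, -⟩ | ⟨e₂₃, -⟩ <;>
  linarith

lemma two_le_abs_two_mul_sub {a b : ℕ} (h : a ≠ b) : (2 : ℝ) ≤ |((2 * a : ℕ) : ℝ) - (2 * b : ℕ)| := by
  have h' : (1 : ℤ) ≤ |(a : ℤ) - b| := Int.one_le_abs (sub_ne_zero.2 (by exact_mod_cast h))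
  have : (1 : ℝ) ≤ |(a : ℝ) - b| := by exact_mod_cast h'
  push_cast
  rw [← mul_sub, abs_mul, abs_two]
  linarith

lemma rpow_neg_le_two_mul_rpow_neg {a r j : ℝ} (hr : 0 < r) (hra : r ≤ 2 * a) (j_pos : 0 ≤ j)
    (hj₁ : j ≤ 1) : a ^ (-j) ≤ 2 * r ^ (-j) := by
  have ha : 0 < a := by linarith
  have h : r ^ j ≤ 2 * a ^ j :=
    calc r ^ j ≤ (2 * a) ^ j := Real.rpow_le_rpow hr.le hra j_pos
      _ = 2 ^ j * a ^ j := Real.mul_rpow (by norm_num) ha.le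
      _ ≤ 2 * a ^ j := by
          gcongr
          exact Real.rpow_le_self_of_one_le (by norm_num) hj₁
  have : 0 < r ^ j := Real.rpow_pos_of_pos hr j
  rw [Real.rpow_neg ha.le, Real.rpow_neg hr.le]
  calc (a ^ j)⁻¹ = 2 * (2 * a ^ j)⁻¹ := by field_simp
    _ ≤ 2 * (r ^ j)⁻¹ := by gcongr

lemma HolderOnWith.of_dist_le {X Y : Type*} [PseudoMetricSpace X] [PseudoMetricSpace Y]
    {C r : ℝ≥0} {f : X → Y} {s : Set X}
    (h : ∀ x ∈ s, ∀ y ∈ s, dist (f x) (f y) ≤ C * dist x y ^ (r : ℝ)) :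
    HolderOnWith C r f s := by
  intro x hx y hy
  rw [edist_dist, edist_dist, ENNReal.ofReal_rpow_of_nonneg dist_nonneg r.coe_nonneg,
    ← ENNReal.ofReal_coe_nnreal, ← ENNReal.ofReal_mul C.coe_nonneg]
  exact ENNReal.ofReal_le_ofReal (h x hx y hy)

lemma dimH_Icc_prod_Icc_zero_one : dimH (Icc (0 : ℝ) 1 ×ˢ Icc (0 : ℝ) 1) = 2 := by
  have h : Icc (0 : ℝ) 1 ×ˢ Icc (0 : ℝ) 1 ∈ 𝓝 ((1 / 2, 1 / 2) : ℝ × ℝ) :=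
    prod_mem_nhds (Icc_mem_nhds (by norm_num) (by norm_num))
      (Icc_mem_nhds (by norm_num) (by norm_num))
  rw [Real.dimH_of_mem_nhds h, Module.finrank_prod, Module.finrank_self]
  norm_num

open PiNat in
/-- Reading the codes as base-`m` expansions of both coordinates maps the range of `F` onto the
unit square by a `logb R m`-Hölder map. -/
theorem two_mul_logb_le_dimH_range {X : Type*} [MetricSpace X] {m : ℕ} (hm : 1 < m)
    {R c : ℝ} (hR : 1 < R) (hc : 0 < c) {F : (ℕ → Fin m × Fin m) → X}
    (hF : ∀ σ τ l, (∀ t < l, σ t = τ t) → σ l ≠ τ l → c / R ^ l ≤ dist (F σ) (F τ)) :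
    2 * ENNReal.ofReal (Real.logb R m) ≤ dimH (range F) := by
  have hm' : (1 : ℝ) < m := by exact_mod_cast hm
  have hγ : 0 < Real.logb R m := Real.logb_pos hR hm'
  set γ := (Real.logb R m).toNNReal
  have hγ' : (γ : ℝ) = Real.logb R m := Real.coe_toNNReal _ hγ.le
  have hsplit : ∀ {σ τ}, σ ≠ τ → c / R ^ firstDiff σ τ ≤ dist (F σ) (F τ) := fun h ↦
    hF _ _ _ (fun _ ↦ apply_eq_of_lt_firstDiff) (apply_firstDiff_ne h)
  have hinj : Function.Injective F := fun σ τ h ↦ by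
    by_contra hne
    have := hsplit hne
    rw [h, dist_self] at this
    exact (div_pos hc (pow_pos (by linarith) _)).not_ge this
  let val : (ℕ → Fin m × Fin m) → ℝ × ℝ := fun σ ↦
    (Real.ofDigits fun t ↦ (σ t).1, Real.ofDigits fun t ↦ (σ t).2)
  have hval : ∀ σ τ l, (∀ t < l, σ t = τ t) → dist (val σ) (val τ) ≤ ((m : ℝ) ^ l)⁻¹ :=
    fun σ τ l h ↦ max_le
      (Real.abs_ofDigits_sub_ofDigits_le fun t ht ↦ by rw [h t ht])
      (Real.abs_ofDigits_sub_ofDigits_le fun t ht ↦ by rw [h t ht])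
  have : Nonempty (ℕ → Fin m × Fin m) := ⟨fun _ ↦ (⟨0, by omega⟩, ⟨0, by omega⟩)⟩
  let g : X → ℝ × ℝ := val ∘ Function.invFun F
  have hg : ∀ σ, g (F σ) = val σ := fun σ ↦ by
    simp only [g, Function.comp_apply, Function.leftInverse_invFun hinj σ]
  have hholder : HolderOnWith (c⁻¹ ^ (γ : ℝ)).toNNReal γ g (range F) := by
    refine .of_dist_le ?_
    rintro _ ⟨σ, rfl⟩ _ ⟨τ, rfl⟩
    rw [hg, hg, Real.coe_toNNReal _ (by positivity)]
    rcases eq_or_ne σ τ with rfl | hne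
    · rw [dist_self, dist_self]
      positivity
    set l := firstDiff σ τ
    calc dist (val σ) (val τ) ≤ ((m : ℝ) ^ l)⁻¹ :=
          hval σ τ l fun _ ↦ apply_eq_of_lt_firstDiff
      _ = ((R ^ l)⁻¹) ^ (γ : ℝ) := by
          rw [Real.inv_rpow (by positivity), ← Real.rpow_natCast R l, ← Real.rpow_mul (by linarith),
            mul_comm, Real.rpow_mul (by linarith), hγ', Real.rpow_logb (by linarith) hR.ne'
            (by linarith), Real.rpow_natCast]
      _ ≤ (c⁻¹ * dist (F σ) (F τ)) ^ (γ : ℝ) := by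
          gcongr
          rw [inv_mul_eq_div, le_div_iff₀ hc, mul_comm, ← div_eq_mul_inv]
          exact hsplit hne
      _ = c⁻¹ ^ (γ : ℝ) * dist (F σ) (F τ) ^ (γ : ℝ) :=
          Real.mul_rpow (by positivity) dist_nonneg
  have hsq : Icc (0 : ℝ) 1 ×ˢ Icc (0 : ℝ) 1 ⊆ g '' range F := by
    rintro ⟨y₁, y₂⟩ ⟨hy₁, hy₂⟩
    obtain ⟨d₁, -, hd₁⟩ := Real.ofDigits_SurjOn hm hy₁
    obtain ⟨d₂, -, hd₂⟩ := Real.ofDigits_SurjOn hm hy₂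
    exact ⟨F fun t ↦ (d₁ t, d₂ t), mem_range_self _, by rw [hg]; exact Prod.ext hd₁ hd₂⟩
  have h2 : (2 : ℝ≥0∞) ≤ dimH (range F) / γ :=
    dimH_Icc_prod_Icc_zero_one ▸ (dimH_mono hsq).trans (hholder.dimH_image_le (by simpa [γ]))
  rwa [ENNReal.le_div_iff_mul_le (Or.inl (by simpa [γ])) (Or.inl ENNReal.coe_ne_top)] at h2

def twistedBad (i j x₁ x₂ : ℝ) : Set (ℝ × ℝ) :=
  {α | α.1 ∈ Ico (0 : ℝ) 1 ∧ α.2 ∈ Ico (0 : ℝ) 1 ∧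
    ∃ ε > (0 : ℝ), ∀ q : ℤ, q ≠ 0 →
      ε ≤ max (|(q : ℝ)| ^ i * dni ((q : ℝ) * x₁ - α.1))
            (|(q : ℝ)| ^ j * dni ((q : ℝ) * x₂ - α.2))}

/-- Squares are split into `R = 2 * S` columns and rows; the Cantor set keeps `m` of the `S` even
columns and `m` of the `S` even rows, avoiding the rows hit by dangerous rectangles. -/
structure TwistedCantorData where
  i : ℝ
  j : ℝ
  x₁ : ℝ
  x₂ : ℝ
  ε : ℝ
  S : ℕ
  m : ℕ
  hi : 0 < i
  hij : i ≤ j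
  hj : j ≤ 1
  hε : 0 < ε
  hε_le : ε ≤ 1 / 2
  bad : ∀ r : ℤ, r ≠ 0 →
    ε ≤ |(r : ℝ)| ^ i * dni (r * x₁) ∨ ε ≤ |(r : ℝ)| ^ j * dni (r * x₂)
  hm : m + 4 ≤ S

namespace TwistedCantorData

variable (P : TwistedCantorData)

def R : ℕ := 2 * P.S

noncomputable def δ (l : ℕ) : ℝ := ((P.R : ℝ) ^ l)⁻¹ / 4

noncomputable def p : ℝ := P.i / P.j

/-- Chosen so that `e ^ p = ε / (4 R²)`: this makes both alternatives of `Bad(i,j)` for a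
difference of two window integers useful at once. -/
noncomputable def e : ℝ := (P.ε / (4 * (P.R : ℝ) ^ 2)) ^ (P.j / P.i)

noncomputable def width (q : ℤ) : ℝ := P.e * |(q : ℝ)| ^ (-P.i)

noncomputable def height (q : ℤ) : ℝ := P.e * |(q : ℝ)| ^ (-P.j)

lemma two_le_R : (2 : ℝ) ≤ P.R := by
  have : 2 ≤ P.R := by have := P.hm; unfold R; omega
  exact_mod_cast this

lemma R_pos : (0 : ℝ) < P.R := by linarith [P.two_le_R]

lemma δ_pos (l : ℕ) : 0 < P.δ l := by
  have := P.R_pos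
  unfold δ
  positivity

lemma δ_eq_inv_pow (l : ℕ) : P.δ l = (P.R : ℝ)⁻¹ ^ l / 4 := by
  rw [δ, inv_pow]

lemma δ_le (l : ℕ) : P.δ l ≤ 1 / 4 := by
  have : ((P.R : ℝ) ^ l)⁻¹ ≤ 1 := inv_le_one_of_one_le₀ (one_le_pow₀ (by linarith [P.two_le_R]))
  unfold δ
  linarith

lemma δ_succ (l : ℕ) : P.δ (l + 1) = P.δ l / P.R := by
  unfold δ
  rw [pow_succ, mul_inv]
  ring

lemma δ_add_two (l : ℕ) : P.δ (l + 2) = P.δ l / (P.R : ℝ) ^ 2 := by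
  rw [P.δ_succ, P.δ_succ]
  ring

lemma two_mul_δ_succ_le (l : ℕ) : 2 * P.δ (l + 1) ≤ P.δ l := by
  rw [P.δ_succ, mul_div_assoc', div_le_iff₀ P.R_pos]
  nlinarith [P.δ_pos l, P.two_le_R]

lemma j_pos : 0 < P.j := P.hi.trans_le P.hij

lemma p_pos : 0 < P.p := div_pos P.hi P.j_pos

lemma p_le_one : P.p ≤ 1 := div_le_one_of_le₀ P.hij P.j_pos.le

lemma δ_le_δ_rpow (l : ℕ) : P.δ l ≤ P.δ l ^ P.p :=
  Real.self_le_rpow_of_le_one (P.δ_pos l).le (by linarith [P.δ_le l]) P.p_le_one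

lemma e_pos : 0 < P.e := by
  have := P.R_pos
  have := P.hε
  unfold e
  positivity

lemma e_rpow_p : P.e ^ P.p = P.ε / (4 * (P.R : ℝ) ^ 2) := by
  have := P.R_pos
  rw [e, p, ← Real.rpow_mul (by have := P.hε; positivity),
    div_mul_div_cancel₀ P.hi.ne', div_self P.j_pos.ne', Real.rpow_one]

lemma e_le : P.e ≤ P.ε / (4 * (P.R : ℝ) ^ 2) := by
  have := P.R_pos
  have h : P.ε / (4 * (P.R : ℝ) ^ 2) ≤ 1 := by
    rw [div_le_one (by positivity)]
    nlinarith [P.hε_le, P.two_le_R]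
  exact Real.rpow_le_self_of_le_one (by have := P.hε; positivity) h
    ((one_le_div P.hi).2 P.hij)

lemma four_mul_R_sq_mul_e_le : 4 * (P.R : ℝ) ^ 2 * P.e ≤ P.ε := by
  have := P.R_pos
  have := P.e_le
  rw [le_div_iff₀ (by positivity)] at this
  linarith

lemma abs_rpow_neg_i (q : ℤ) : |(q : ℝ)| ^ (-P.i) = (|(q : ℝ)| ^ (-P.j)) ^ P.p := by
  rw [← Real.rpow_mul (abs_nonneg _), p, neg_mul, mul_div_cancel₀ _ P.j_pos.ne']

lemma ε_mul_abs_rpow_neg_i (q : ℤ) :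
    P.ε * |(q : ℝ)| ^ (-P.i) = 4 * (P.R : ℝ) ^ 2 * P.height q ^ P.p := by
  have := P.R_pos
  rw [height, Real.mul_rpow P.e_pos.le (by positivity), P.e_rpow_p, P.abs_rpow_neg_i]
  field_simp

lemma width_le_height_rpow (q : ℤ) : P.width q ≤ P.height q ^ P.p := by
  have := P.R_pos
  have hε := P.hε
  have hh : 0 ≤ P.height q ^ P.p := Real.rpow_nonneg (by unfold height; have := P.e_pos; positivity) _
  have key : P.width q * P.ε = P.e * (4 * (P.R : ℝ) ^ 2 * P.height q ^ P.p) := by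
    rw [← P.ε_mul_abs_rpow_neg_i, width]
    ring
  nlinarith [P.four_mul_R_sq_mul_e_le]

def InWindow (l : ℕ) (q : ℤ) : Prop := P.δ (l + 2) < P.height q ∧ P.height q ≤ P.δ (l + 1)

def Dangerous (l : ℕ) (c : ℝ × ℝ) (q : ℤ) : Prop :=
  q ≠ 0 ∧ P.InWindow l q ∧ ∃ a ∈ Icc c.1 (c.1 + P.δ l), ∃ b ∈ Icc c.2 (c.2 + P.δ l),
    dni ((q : ℝ) * P.x₁ - a) < P.width q ∧ dni ((q : ℝ) * P.x₂ - b) < P.height q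

lemma height_pos {q : ℤ} (hq : q ≠ 0) : 0 < P.height q :=
  mul_pos P.e_pos (Real.rpow_pos_of_pos (abs_pos.2 (Int.cast_ne_zero.2 hq)) _)

lemma height_le_e {q : ℤ} (hq : q ≠ 0) : P.height q ≤ P.e := by
  have : (1 : ℝ) ≤ |(q : ℝ)| := by exact_mod_cast Int.one_le_abs hq
  exact mul_le_of_le_one_right P.e_pos.le
    (Real.rpow_le_one_of_one_le_of_nonpos this (by linarith [P.j_pos]))

lemma exists_inWindow {q : ℤ} (hq : q ≠ 0) : ∃ l, P.InWindow l q := by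
  have hR := P.R_pos
  have hx : 4 * P.R * P.height q ≤ 1 := by
    have h1 := P.height_le_e hq
    have h2 := P.e_le
    rw [le_div_iff₀ (by positivity)] at h2
    nlinarith [P.two_le_R, P.hε_le, P.height_pos hq]
  obtain ⟨l, hl₁, hl₂⟩ := exists_nat_pow_near_of_lt_one (by have := P.height_pos hq; positivity)
    hx (inv_pos.2 hR) (inv_lt_one_of_one_lt₀ (by linarith [P.two_le_R]))
  have hRR : 4 * P.R * P.height q * (P.R : ℝ)⁻¹ = 4 * P.height q := by field_simp
  refine ⟨l, ?_, ?_⟩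
  · have := mul_lt_mul_of_pos_right hl₁ (inv_pos.2 hR)
    rw [P.δ_eq_inv_pow, pow_succ]
    linarith
  · have := mul_le_mul_of_nonneg_right hl₂ (inv_pos.2 hR).le
    rw [P.δ_eq_inv_pow, pow_succ]
    linarith

lemma height_le_two_mul_height_sub {q₁ q₂ : ℤ} (hne : q₁ ≠ q₂) (h : |q₁| ≤ |q₂|) :
    P.height q₂ ≤ 2 * P.height (q₁ - q₂) := by
  have hr : (0 : ℝ) < |((q₁ - q₂ : ℤ) : ℝ)| := abs_pos.2 (by exact_mod_cast sub_ne_zero.2 hne)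
  have hle : |((q₁ - q₂ : ℤ) : ℝ)| ≤ 2 * |(q₂ : ℝ)| := by
    have : |(q₁ : ℝ)| ≤ |(q₂ : ℝ)| := by exact_mod_cast h
    push_cast
    linarith [abs_sub (q₁ : ℝ) q₂]
  have := rpow_neg_le_two_mul_rpow_neg hr hle P.j_pos.le P.hj
  unfold height
  nlinarith [P.e_pos]

variable {P} in
lemma InWindow.δ_le_two_mul_height_sub {l : ℕ} {q₁ q₂ : ℤ} (h₁ : P.InWindow l q₁)
    (h₂ : P.InWindow l q₂) (hne : q₁ ≠ q₂) : P.δ (l + 2) ≤ 2 * P.height (q₁ - q₂) := by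
  rcases le_total |q₁| |q₂| with h | h
  · linarith [h₂.1, P.height_le_two_mul_height_sub hne h]
  · have : P.height (q₁ - q₂) = P.height (q₂ - q₁) := by
      simp only [height]
      rw [← abs_neg]
      push_cast
      ring_nf
    linarith [h₁.1, P.height_le_two_mul_height_sub hne.symm h]

lemma two_mul_δ_le_ε_mul {l : ℕ} {r : ℤ} (hr : P.δ (l + 2) ≤ 2 * P.height r) :
    2 * P.δ l ≤ P.ε * |(r : ℝ)| ^ (-P.j) := by
  have hR := P.R_pos
  have hy : 0 ≤ |(r : ℝ)| ^ (-P.j) := Real.rpow_nonneg (abs_nonneg _) _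
  rw [P.δ_add_two, div_le_iff₀ (by positivity), height] at hr
  nlinarith [P.four_mul_R_sq_mul_e_le]

lemma two_mul_δ_rpow_le_ε_mul {l : ℕ} {r : ℤ} (hr : P.δ (l + 2) ≤ 2 * P.height r) :
    2 * P.δ l ^ P.p ≤ P.ε * |(r : ℝ)| ^ (-P.i) := by
  have hR := P.R_pos
  have hk : (1 : ℝ) ≤ 2 * (P.R : ℝ) ^ 2 := by nlinarith [P.two_le_R]
  rw [P.ε_mul_abs_rpow_neg_i]
  calc 2 * P.δ l ^ P.p = 4 * (P.R : ℝ) ^ 2 * (P.δ l ^ P.p / (2 * (P.R : ℝ) ^ 2)) := by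
        field_simp; ring
    _ ≤ 4 * (P.R : ℝ) ^ 2 * (P.δ l ^ P.p / (2 * (P.R : ℝ) ^ 2) ^ P.p) :=
        mul_le_mul_of_nonneg_left (div_le_div_of_nonneg_left
          (Real.rpow_nonneg (P.δ_pos l).le _) (by positivity)
          (Real.rpow_le_self_of_one_le hk P.p_le_one)) (by positivity)
    _ = 4 * (P.R : ℝ) ^ 2 * (P.δ (l + 2) / 2) ^ P.p := by
        rw [P.δ_add_two, div_div, mul_comm ((P.R : ℝ) ^ 2) 2,
          Real.div_rpow (P.δ_pos l).le (by positivity)]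
    _ ≤ 4 * (P.R : ℝ) ^ 2 * P.height r ^ P.p :=
        mul_le_mul_of_nonneg_left (Real.rpow_le_rpow (by have := P.δ_pos (l + 2); positivity)
          (by linarith) P.p_pos.le) (by positivity)

lemma bad_rpow_neg {r : ℤ} (hr : r ≠ 0) :
    P.ε * |(r : ℝ)| ^ (-P.i) ≤ dni (r * P.x₁) ∨ P.ε * |(r : ℝ)| ^ (-P.j) ≤ dni (r * P.x₂) := by
  have hpos : (0 : ℝ) < |(r : ℝ)| := abs_pos.2 (Int.cast_ne_zero.2 hr)
  have key : ∀ k d : ℝ, P.ε ≤ |(r : ℝ)| ^ k * d → P.ε * |(r : ℝ)| ^ (-k) ≤ d := fun k d h ↦ by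
    rwa [Real.rpow_neg hpos.le, ← div_eq_mul_inv, div_le_iff₀' (Real.rpow_pos_of_pos hpos _)]
  exact (P.bad r hr).imp (key _ _) (key _ _)

variable {P} in
lemma Dangerous.two_mul_δ_rpow_le_dni {l : ℕ} {c : ℝ × ℝ} {q₁ q₂ : ℤ}
    (h₁ : P.Dangerous l c q₁) (h₂ : P.Dangerous l c q₂) (hne : q₁ ≠ q₂) :
    2 * P.δ l ^ P.p ≤ dni (((q₁ - q₂ : ℤ) : ℝ) * P.x₁) := by
  have hr := h₁.2.1.δ_le_two_mul_height_sub h₂.2.1 hne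
  rcases P.bad_rpow_neg (sub_ne_zero.2 hne) with hbad | hbad
  · exact (P.two_mul_δ_rpow_le_ε_mul hr).trans hbad
  obtain ⟨-, ⟨-, hw₁⟩, -, -, b₁, hb₁, -, hy₁⟩ := h₁
  obtain ⟨-, ⟨-, hw₂⟩, -, -, b₂, hb₂, -, hy₂⟩ := h₂
  have hb : |b₁ - b₂| ≤ P.δ l :=
    abs_sub_le_iff.2 ⟨by linarith [hb₁.2, hb₂.1], by linarith [hb₁.1, hb₂.2]⟩
  have hclose : dni (((q₁ - q₂ : ℤ) : ℝ) * P.x₂) < 2 * P.δ l :=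
    calc dni (((q₁ - q₂ : ℤ) : ℝ) * P.x₂)
        = dni (((q₁ : ℝ) * P.x₂ - b₁) - ((q₂ : ℝ) * P.x₂ - b₂) + (b₁ - b₂)) := by
          push_cast; ring_nf
      _ ≤ dni ((q₁ : ℝ) * P.x₂ - b₁) + dni ((q₂ : ℝ) * P.x₂ - b₂) + |b₁ - b₂| :=
          (dni_add_le _ _).trans (add_le_add (dni_sub_le _ _) (dni_le_abs _))
      _ < 2 * P.δ l := by linarith [P.two_mul_δ_succ_le l]
  linarith [P.two_mul_δ_le_ε_mul hr]

variable {P} in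
lemma Dangerous.exists_intCast_mem {l : ℕ} {c : ℝ × ℝ} {q : ℤ} (h : P.Dangerous l c q) :
    ∃ n : ℤ, (q : ℝ) * P.x₁ - n ∈ Icc (c.1 - P.δ l ^ P.p) (c.1 + P.δ l + P.δ l ^ P.p) := by
  obtain ⟨hq, ⟨-, hw⟩, a, ha, -, -, hx, -⟩ := h
  have hwidth : P.width q ≤ P.δ l ^ P.p :=
    (P.width_le_height_rpow q).trans (Real.rpow_le_rpow (P.height_pos hq).le
      (hw.trans (by linarith [P.two_mul_δ_succ_le l, P.δ_pos (l + 1)])) P.p_pos.le)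
  refine ⟨round ((q : ℝ) * P.x₁ - a), ?_⟩
  have := abs_lt.1 (hx.trans_le hwidth)
  constructor <;> linarith [ha.1, ha.2]

variable {P} in
lemma Dangerous.eq_or_eq {l : ℕ} {c : ℝ × ℝ} {q₁ q₂ q₃ : ℤ} (h₁ : P.Dangerous l c q₁)
    (h₂ : P.Dangerous l c q₂) (h₃ : P.Dangerous l c q₃) :
    q₁ = q₂ ∨ q₁ = q₃ ∨ q₂ = q₃ := by
  by_contra! hne
  obtain ⟨n₁, hn₁⟩ := h₁.exists_intCast_mem
  obtain ⟨n₂, hn₂⟩ := h₂.exists_intCast_mem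
  obtain ⟨n₃, hn₃⟩ := h₃.exists_intCast_mem
  have hsep : ∀ {qa qb : ℤ} {na nb : ℤ}, P.Dangerous l c qa → P.Dangerous l c qb → qa ≠ qb →
      2 * P.δ l ^ P.p ≤ |((qa : ℝ) * P.x₁ - na) - ((qb : ℝ) * P.x₁ - nb)| := by
    intro qa qb na nb ha hb hab
    calc 2 * P.δ l ^ P.p ≤ dni (((qa - qb : ℤ) : ℝ) * P.x₁) := ha.two_mul_δ_rpow_le_dni hb hab
      _ ≤ |((qa - qb : ℤ) : ℝ) * P.x₁ - ((na - nb : ℤ) : ℝ)| := dni_le_abs_sub_intCast _ _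
      _ = _ := by push_cast; ring_nf
  have := two_mul_le_of_three_separated hn₁ hn₂ hn₃ (hsep h₁ h₂ hne.1) (hsep h₁ h₃ hne.2.1)
    (hsep h₂ h₃ hne.2.2)
  have := P.δ_le_δ_rpow l
  linarith [Real.rpow_pos_of_pos (P.δ_pos l) P.p]

lemma exists_dangerous_subset_pair (l : ℕ) (c : ℝ × ℝ) :
    ∃ A B : ℤ, ∀ q, P.Dangerous l c q → q = A ∨ q = B := by
  by_cases hA : ∃ A, P.Dangerous l c A
  · obtain ⟨A, hA⟩ := hA
    by_cases hB : ∃ B, P.Dangerous l c B ∧ B ≠ A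
    · obtain ⟨B, hB, hBA⟩ := hB
      exact ⟨A, B, fun q hq ↦ by rcases hq.eq_or_eq hA hB with h | h | h <;> grind⟩
    · push Not at hB
      exact ⟨A, A, fun q hq ↦ .inl (hB q hq)⟩
  · push Not at hA
    exact ⟨0, 0, fun q hq ↦ (hA q hq).elim⟩

def RowHit (l : ℕ) (c : ℝ × ℝ) (q : ℤ) (t : ℕ) : Prop :=
  ∃ b ∈ Icc (c.2 + t * P.δ (l + 1)) (c.2 + (t + 1) * P.δ (l + 1)),
    dni ((q : ℝ) * P.x₂ - b) < P.height q

variable {P} in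
lemma RowHit.le_add_two {l : ℕ} {c : ℝ × ℝ} {q : ℤ} {t t' : ℕ}
    (hq : P.height q ≤ P.δ (l + 1)) (ht : t < P.R) (ht' : t' < P.R)
    (h : P.RowHit l c q t) (h' : P.RowHit l c q t') : t ≤ t' + 2 := by
  obtain ⟨b, hb, hd⟩ := h
  obtain ⟨b', hb', hd'⟩ := h'
  have hrow : ∀ u : ℕ, u < P.R → ((u : ℝ) + 1) * P.δ (l + 1) ≤ P.δ l := fun u hu ↦ by
    have : (u : ℝ) + 1 ≤ P.R := by exact_mod_cast hu
    rw [P.δ_succ, ← mul_div_assoc, div_le_iff₀ P.R_pos]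
    nlinarith [P.δ_pos l]
  have hδ := P.δ_pos (l + 1)
  have hclose : |b - b'| < 2 * P.δ (l + 1) := by
    have : |((q : ℝ) * P.x₂ - b') - ((q : ℝ) * P.x₂ - b)| < 1 - 2 * P.height q := by
      rw [sub_sub_sub_cancel_left, abs_lt]
      have := hrow t ht
      have := hrow t' ht'
      constructor <;> nlinarith [hb.1, hb.2, hb'.1, hb'.2, P.δ_le l, P.two_mul_δ_succ_le l]
    have := abs_sub_lt_of_dni_lt hd' hd this
    rw [sub_sub_sub_cancel_left] at this
    linarith
  by_contra! htt
  have : (t' : ℝ) + 3 ≤ t := by exact_mod_cast htt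
  have := (abs_lt.1 hclose).2
  nlinarith [hb.1, hb'.2]

def RowBad (l : ℕ) (c : ℝ × ℝ) (t : ℕ) : Prop := ∃ q, P.Dangerous l c q ∧ P.RowHit l c q t

open Classical in
noncomputable def hitRows (l : ℕ) (c : ℝ × ℝ) (q : ℤ) : Finset ℕ :=
  (Finset.range P.S).filter fun s ↦ P.Dangerous l c q ∧ P.RowHit l c q (2 * s)

open Classical in
noncomputable def goodRows (l : ℕ) (c : ℝ × ℝ) : Finset ℕ :=
  (Finset.range P.S).filter fun s ↦ ¬ P.RowBad l c (2 * s)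

lemma card_hitRows_le (l : ℕ) (c : ℝ × ℝ) (q : ℤ) : (P.hitRows l c q).card ≤ 2 := by
  have hR : P.R = 2 * P.S := rfl
  have hmaps : ∀ s ∈ P.hitRows l c q, s % 2 ∈ Finset.range 2 := fun s _ ↦
    Finset.mem_range.2 (Nat.mod_lt s two_pos)
  refine (Finset.card_le_card_of_injOn (· % 2) hmaps ?_).trans_eq (Finset.card_range 2)
  intro s hs s' hs' hss'
  simp only [hitRows, Finset.coe_filter, Finset.mem_range, mem_ofPred_eq] at hs hs'
  obtain ⟨hs, ⟨-, ⟨-, hw⟩, -⟩, hit⟩ := hs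
  obtain ⟨hs', -, hit'⟩ := hs'
  have := hit.le_add_two hw (by omega) (by omega) hit'
  have := hit'.le_add_two hw (by omega) (by omega) hit
  simp only at hss'
  omega

lemma le_card_goodRows (l : ℕ) (c : ℝ × ℝ) : P.m ≤ (P.goodRows l c).card := by
  classical
  obtain ⟨A, B, hAB⟩ := P.exists_dangerous_subset_pair l c
  have hbad : (Finset.range P.S).filter (fun s ↦ P.RowBad l c (2 * s)) ⊆
      P.hitRows l c A ∪ P.hitRows l c B := by
    intro s hs
    simp only [Finset.mem_filter, Finset.mem_range] at hs
    obtain ⟨q, hq, hit⟩ := hs.2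
    rcases hAB q hq with rfl | rfl
    · exact Finset.mem_union_left _ (by simp [hitRows, hs.1, hq, hit])
    · exact Finset.mem_union_right _ (by simp [hitRows, hs.1, hq, hit])
  have hsplit := Finset.card_filter_add_card_filter_not (s := Finset.range P.S)
    (p := fun s ↦ P.RowBad l c (2 * s))
  have := (Finset.card_le_card hbad).trans (Finset.card_union_le _ _)
  have := P.card_hitRows_le l c A
  have := P.card_hitRows_le l c B
  rw [Finset.card_range] at hsplit
  have := P.hm
  unfold goodRows
  omega

def colDigit (k : Fin P.m) : Fin P.R :=
  ⟨2 * k, by have := k.2; have := P.hm; unfold R; omega⟩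

noncomputable def rowIndex (l : ℕ) (c : ℝ × ℝ) : Fin P.m ↪o ℕ :=
  (P.goodRows l c).orderEmbOfCardLe (P.le_card_goodRows l c)

lemma rowIndex_mem (l : ℕ) (c : ℝ × ℝ) (k : Fin P.m) : P.rowIndex l c k ∈ P.goodRows l c :=
  Finset.orderEmbOfCardLe_mem _ _ k

noncomputable def rowDigit (l : ℕ) (c : ℝ × ℝ) (k : Fin P.m) : Fin P.R :=
  ⟨2 * P.rowIndex l c k, by
    have := P.rowIndex_mem l c k
    simp only [goodRows, Finset.mem_filter, Finset.mem_range] at this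
    unfold R
    omega⟩

lemma not_rowBad_rowDigit (l : ℕ) (c : ℝ × ℝ) (k : Fin P.m) :
    ¬ P.RowBad l c (P.rowDigit l c k) := by
  have := P.rowIndex_mem l c k
  simp only [goodRows, Finset.mem_filter] at this
  exact this.2

lemma two_le_abs_colDigit_sub {k k' : Fin P.m} (h : k ≠ k') :
    (2 : ℝ) ≤ |((P.colDigit k : ℕ) : ℝ) - (P.colDigit k' : ℕ)| :=
  two_le_abs_two_mul_sub (Fin.val_ne_of_ne h)

lemma two_le_abs_rowDigit_sub (l : ℕ) (c : ℝ × ℝ) {k k' : Fin P.m} (h : k ≠ k') :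
    (2 : ℝ) ≤ |((P.rowDigit l c k : ℕ) : ℝ) - (P.rowDigit l c k' : ℕ)| :=
  two_le_abs_two_mul_sub ((P.rowIndex l c).injective.ne h)

noncomputable def corner (σ : ℕ → Fin P.m × Fin P.m) : ℕ → ℝ × ℝ
  | 0 => (0, 0)
  | l + 1 => ((corner σ l).1 + P.δ (l + 1) * (P.colDigit (σ l).1 : ℕ),
      (corner σ l).2 + P.δ (l + 1) * (P.rowDigit l (corner σ l) (σ l).2 : ℕ))

def colDigits (σ : ℕ → Fin P.m × Fin P.m) (l : ℕ) : Fin P.R := P.colDigit (σ l).1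

noncomputable def rowDigits (σ : ℕ → Fin P.m × Fin P.m) (l : ℕ) : Fin P.R :=
  P.rowDigit l (P.corner σ l) (σ l).2

noncomputable def point (σ : ℕ → Fin P.m × Fin P.m) : ℝ × ℝ :=
  (Real.ofDigits (P.colDigits σ) / 4, Real.ofDigits (P.rowDigits σ) / 4)

lemma corner_eq (σ : ℕ → Fin P.m × Fin P.m) (l : ℕ) :
    P.corner σ l = ((∑ t ∈ Finset.range l, Real.ofDigitsTerm (P.colDigits σ) t) / 4,
      (∑ t ∈ Finset.range l, Real.ofDigitsTerm (P.rowDigits σ) t) / 4) := by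
  induction l with
  | zero => simp [corner]
  | succ l ih =>
    have h₁ : (P.corner σ (l + 1)).1 = (P.corner σ l).1 + P.δ (l + 1) * (P.colDigits σ l : ℕ) :=
      rfl
    have h₂ : (P.corner σ (l + 1)).2 = (P.corner σ l).2 + P.δ (l + 1) * (P.rowDigits σ l : ℕ) :=
      rfl
    refine Prod.ext ?_ ?_
    · rw [h₁, ih]
      simp only [Finset.sum_range_succ, Real.ofDigitsTerm, δ]
      ring
    · rw [h₂, ih]
      simp only [Finset.sum_range_succ, Real.ofDigitsTerm, δ]
      ring

lemma point_mem (σ : ℕ → Fin P.m × Fin P.m) (l : ℕ) :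
    (P.point σ).1 ∈ Icc (P.corner σ l).1 ((P.corner σ l).1 + P.δ l) ∧
    (P.point σ).2 ∈ Icc (P.corner σ l).2 ((P.corner σ l).2 + P.δ l) := by
  have h₁ := Real.ofDigits_mem_Icc (P.colDigits σ) l
  have h₂ := Real.ofDigits_mem_Icc (P.rowDigits σ) l
  simp only [point, P.corner_eq, δ, mem_Icc] at h₁ h₂ ⊢
  refine ⟨⟨?_, ?_⟩, ?_, ?_⟩ <;> linarith [h₁.1, h₁.2, h₂.1, h₂.2]

lemma corner_congr {σ τ : ℕ → Fin P.m × Fin P.m} {l : ℕ} (h : ∀ t < l, σ t = τ t) :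
    P.corner σ l = P.corner τ l := by
  induction l with
  | zero => rfl
  | succ l ih =>
    simp only [corner, ih fun t ht ↦ h t (by omega), h l (by omega)]

lemma le_dist_point {σ τ : ℕ → Fin P.m × Fin P.m} {l : ℕ} (h : ∀ t < l, σ t = τ t)
    (hne : σ l ≠ τ l) : 1 / (4 * P.R) / (P.R : ℝ) ^ l ≤ dist (P.point σ) (P.point τ) := by
  have hδ : 1 / (4 * P.R) / (P.R : ℝ) ^ l = ((P.R : ℝ) ^ (l + 1))⁻¹ / 4 := by
    rw [pow_succ]; field_simp
  rw [hδ, Prod.dist_eq, Real.dist_eq, Real.dist_eq]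
  by_cases hcol : (σ l).1 = (τ l).1
  · have hrow : (σ l).2 ≠ (τ l).2 := fun h2 ↦ hne (Prod.ext hcol h2)
    have hpre : ∀ t < l, P.rowDigits σ t = P.rowDigits τ t := fun t ht ↦ by
      rw [rowDigits, rowDigits, P.corner_congr fun s hs ↦ h s (hs.trans ht), h t ht]
    have h2 : (2 : ℝ) ≤ |((P.rowDigits σ l : ℕ) : ℝ) - (P.rowDigits τ l : ℕ)| := by
      rw [rowDigits, rowDigits, P.corner_congr h]
      exact P.two_le_abs_rowDigit_sub l _ hrow
    have := Real.inv_pow_succ_le_abs_ofDigits_sub hpre h2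
    refine le_max_of_le_right ?_
    simp only [point, ← sub_div, abs_div, abs_of_pos (by norm_num : (0 : ℝ) < 4)]
    linarith
  · have hpre : ∀ t < l, P.colDigits σ t = P.colDigits τ t := fun t ht ↦ by
      rw [colDigits, colDigits, h t ht]
    have := Real.inv_pow_succ_le_abs_ofDigits_sub hpre (P.two_le_abs_colDigit_sub hcol)
    refine le_max_of_le_left ?_
    simp only [point, ← sub_div, abs_div, abs_of_pos (by norm_num : (0 : ℝ) < 4)]
    linarith

lemma width_le_dni_or_height_le_dni (σ : ℕ → Fin P.m × Fin P.m) {q : ℤ} (hq : q ≠ 0) :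
    P.width q ≤ dni ((q : ℝ) * P.x₁ - (P.point σ).1) ∨
      P.height q ≤ dni ((q : ℝ) * P.x₂ - (P.point σ).2) := by
  by_contra! ⟨h₁, h₂⟩
  obtain ⟨l, hl⟩ := P.exists_inWindow hq
  obtain ⟨hmem₁, hmem₂⟩ := P.point_mem σ l
  have hrow := (P.point_mem σ (l + 1)).2
  simp only [corner] at hrow
  refine P.not_rowBad_rowDigit l (P.corner σ l) (σ l).2
    ⟨q, ⟨hq, hl, _, hmem₁, _, hmem₂, h₁, h₂⟩, _, ⟨?_, ?_⟩, h₂⟩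
  · linarith [hrow.1]
  · linarith [hrow.2]

lemma point_mem_twistedBad (σ : ℕ → Fin P.m × Fin P.m) :
    P.point σ ∈ twistedBad P.i P.j P.x₁ P.x₂ := by
  obtain ⟨h₁, h₂⟩ := P.point_mem σ 0
  have hδ : P.δ 0 = 1 / 4 := by simp [δ]
  simp only [corner, hδ, zero_add, mem_Icc] at h₁ h₂
  refine ⟨⟨h₁.1, by linarith [h₁.2]⟩, ⟨h₂.1, by linarith [h₂.2]⟩, P.e, P.e_pos, fun q hq ↦ ?_⟩
  have hpos : (0 : ℝ) < |(q : ℝ)| := abs_pos.2 (Int.cast_ne_zero.2 hq)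
  have key : ∀ k : ℝ, |(q : ℝ)| ^ k * (P.e * |(q : ℝ)| ^ (-k)) = P.e := fun k ↦ by
    rw [mul_left_comm, ← Real.rpow_add hpos, add_neg_cancel, Real.rpow_zero, mul_one]
  rcases P.width_le_dni_or_height_le_dni σ hq with h | h
  · exact le_max_of_le_left <| (key P.i).symm.le.trans
      (mul_le_mul_of_nonneg_left h (Real.rpow_nonneg hpos.le _))
  · exact le_max_of_le_right <| (key P.j).symm.le.trans
      (mul_le_mul_of_nonneg_left h (Real.rpow_nonneg hpos.le _))

lemma two_mul_logb_le_dimH (hm : 1 < P.m) :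
    2 * ENNReal.ofReal (Real.logb P.R P.m) ≤ dimH (twistedBad P.i P.j P.x₁ P.x₂) :=
  (two_mul_logb_le_dimH_range hm (by linarith [P.two_le_R]) (by have := P.R_pos; positivity)
    fun _ _ _ ↦ P.le_dist_point).trans (dimH_mono (range_subset_iff.2 P.point_mem_twistedBad))

end TwistedCantorData

lemma isometry_swap {α β : Type*} [PseudoEMetricSpace α] [PseudoEMetricSpace β] :
    Isometry (Prod.swap : α × β → β × α) := fun a b ↦ by
  simp only [Prod.edist_eq, Prod.fst_swap, Prod.snd_swap, max_comm]

lemma image_swap_twistedBad (i j x₁ x₂ : ℝ) :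
    Prod.swap '' twistedBad j i x₂ x₁ = twistedBad i j x₁ x₂ := by
  rw [image_swap_eq_preimage_swap]
  ext α
  simp only [twistedBad, mem_preimage, mem_ofPred_eq, Prod.fst_swap, Prod.snd_swap, max_comm]
  tauto

lemma two_le_dimH_twistedBad_of_le {i j x₁ x₂ ε : ℝ} (hi : 0 < i) (hij : i ≤ j) (hj : j ≤ 1)
    (hε : 0 < ε) (hε_le : ε ≤ 1 / 2) (bad : ∀ r : ℤ, r ≠ 0 →
      ε ≤ |(r : ℝ)| ^ i * dni (r * x₁) ∨ ε ≤ |(r : ℝ)| ^ j * dni (r * x₂)) :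
    2 ≤ dimH (twistedBad i j x₁ x₂) := by
  have hk : ∀ k : ℕ, 2 * ENNReal.ofReal (((k + 1 : ℕ) : ℝ) / ((k + 1 : ℕ) + 3)) ≤
      dimH (twistedBad i j x₁ x₂) := by
    intro k
    let P : TwistedCantorData := ⟨i, j, x₁, x₂, ε, 2 ^ (k + 3), 2 ^ (k + 1), hi, hij, hj, hε,
      hε_le, bad, by have := Nat.one_le_two_pow (n := k); rw [pow_succ, pow_succ, pow_succ]; omega⟩
    have hlogb : Real.logb P.R P.m = ((k + 1 : ℕ) : ℝ) / ((k + 1 : ℕ) + 3) := by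
      have hR : (P.R : ℝ) = 2 ^ (k + 4) := by
        simp only [TwistedCantorData.R, P]
        push_cast
        ring
      have hm : (P.m : ℝ) = 2 ^ (k + 1) := by simp [P]
      rw [hR, hm, Real.logb, Real.log_pow, Real.log_pow, mul_div_mul_right _ _ (by positivity)]
      push_cast
      ring
    rw [← hlogb]
    exact P.two_mul_logb_le_dimH (Nat.one_lt_two_pow (by omega))
  have hlim : Tendsto (fun k : ℕ ↦ 2 * ENNReal.ofReal (((k + 1 : ℕ) : ℝ) / ((k + 1 : ℕ) + 3)))
      atTop (𝓝 2) := by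
    have := ENNReal.tendsto_ofReal
      ((tendsto_natCast_div_add_atTop (3 : ℝ)).comp (tendsto_add_atTop_nat 1))
    simpa using ENNReal.Tendsto.const_mul this (Or.inr ENNReal.ofNat_ne_top)
  exact le_of_tendsto' hlim hk

lemma two_le_dimH_twistedBad {i j x₁ x₂ : ℝ} (hi : 0 < i) (hj : 0 < j) (hi₁ : i ≤ 1) (hj₁ : j ≤ 1)
    (hx : ∃ ε > (0 : ℝ), ∀ q : ℤ, q ≠ 0 →
      ε ≤ max (|(q : ℝ)| ^ i * dni ((q : ℝ) * x₁)) (|(q : ℝ)| ^ j * dni ((q : ℝ) * x₂))) :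
    2 ≤ dimH (twistedBad i j x₁ x₂) := by
  obtain ⟨ε, hε, hbad⟩ := hx
  have hbad' : ∀ r : ℤ, r ≠ 0 → min ε (1 / 2) ≤ |(r : ℝ)| ^ i * dni (r * x₁) ∨
      min ε (1 / 2) ≤ |(r : ℝ)| ^ j * dni (r * x₂) := fun r hr ↦
    le_max_iff.1 ((min_le_left _ _).trans (hbad r hr))
  have hε' : 0 < min ε (1 / 2) := lt_min hε (by norm_num)
  rcases le_total i j with h | h
  · exact two_le_dimH_twistedBad_of_le hi h hj₁ hε' (min_le_right _ _) hbad'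
  · rw [← image_swap_twistedBad, isometry_swap.dimH_image]
    exact two_le_dimH_twistedBad_of_le hj h hi₁ hε' (min_le_right _ _) fun r hr ↦ (hbad' r hr).symm

theorem badTwisted_two_dim_dimH_eq_general (i j : ℝ) (hi : 0 < i) (hj : 0 < j)
    (hij : i + j = 1) (x₁ x₂ : ℝ)
    (hx : ∃ ε > (0 : ℝ), ∀ q : ℤ, q ≠ 0 →
      ε ≤ max (|(q : ℝ)| ^ i * dni ((q : ℝ) * x₁)) (|(q : ℝ)| ^ j * dni ((q : ℝ) * x₂))) :
    dimH {α : ℝ × ℝ | α.1 ∈ Set.Ico (0 : ℝ) 1 ∧ α.2 ∈ Set.Ico (0 : ℝ) 1 ∧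
      ∃ ε > (0 : ℝ), ∀ q : ℤ, q ≠ 0 →
        ε ≤ max (|(q : ℝ)| ^ i * dni ((q : ℝ) * x₁ - α.1))
              (|(q : ℝ)| ^ j * dni ((q : ℝ) * x₂ - α.2))} = 2 := by
  change dimH (twistedBad i j x₁ x₂) = 2
  refine le_antisymm ?_ (two_le_dimH_twistedBad hi hj (by linarith) (by linarith) hx)
  calc _ ≤ dimH (univ : Set (ℝ × ℝ)) := dimH_mono (subset_univ _)
    _ = 2 := by
      rw [Real.dimH_univ_eq_finrank, Module.finrank_prod, Module.finrank_self]
      norm_num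

/-- For `i, j > 0` with `i + j = 1` and `x = (x₁, x₂) ∈ [0,1)²`
belonging to `Bad(i,j)`, the twisted set `Bad_x(i,j)` has full Hausdorff
dimension `2`. -/
theorem badTwisted_two_dim_dimH_eq (i j : ℝ) (hi : 0 < i) (hj : 0 < j)
    (hij : i + j = 1) (x₁ x₂ : ℝ)
    (hx₁ : x₁ ∈ Set.Ico (0 : ℝ) 1) (hx₂ : x₂ ∈ Set.Ico (0 : ℝ) 1)
    (hx : ∃ ε > (0 : ℝ), ∀ q : ℤ, q ≠ 0 →
      ε ≤ max (|(q : ℝ)| ^ i * dni ((q : ℝ) * x₁)) (|(q : ℝ)| ^ j * dni ((q : ℝ) * x₂))) :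
    dimH {α : ℝ × ℝ | α.1 ∈ Set.Ico (0 : ℝ) 1 ∧ α.2 ∈ Set.Ico (0 : ℝ) 1 ∧
      ∃ ε > (0 : ℝ), ∀ q : ℤ, q ≠ 0 →
        ε ≤ max (|(q : ℝ)| ^ i * dni ((q : ℝ) * x₁ - α.1))
              (|(q : ℝ)| ^ j * dni ((q : ℝ) * x₂ - α.2))} = 2 :=
  badTwisted_two_dim_dimH_eq_general i j hi hj hij x₁ x₂ hx
end

section
/- Let n, m ≥ 1 be integers, let k = (k_1,…,k_n) be a weight vector, let M be an m×n real matrix with forms M_i, and let γ ∈ (0,1). Suppose that for every T ≥ 1 the only integer point (u,v) ∈ ℤ^n × ℤ^m with |u_j| ≤ T^{m k_j} for all 1 ≤ j ≤ n and max_{1≤i≤m} |M_i(u) − v_i| ≤ γ T^{−1} is the zero vector. Then for every T ≥ 1 there exists an integer vector (u,v) ∈ ℤ^n × ℤ^m, with u ≠ 0, satisfying: T^{m k_1} < |u_1| ≤ γ^{−m} T^{m k_1}, |u_j| ≤ T^{m k_j} for 2 ≤ j ≤ n, and max_{1≤i≤m} |M_i(u) − v_i| ≤ γ T^{−1}. 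-/
/-!
Minkowski's linear forms theorem, applied to the unimodular map `(u, v) ↦ (u, v - M u)` and the
box `|u₁| ≤ γ⁻ᵐ T^{m k₁}`, `|u_j| ≤ T^{m k_j}` (`j ≥ 2`), `|M_i(u) - v_i| ≤ γ T⁻¹` of volume
`2^{n+m}`, gives a nonzero integer point in the box. By hypothesis it cannot satisfy
`|u₁| ≤ T^{m k₁}`, so `|u₁| > T^{m k₁} > 0`.
-/

open Module Submodule MeasureTheory Matrix

section LinearForms

variable {ι : Type*} [Fintype ι]

theorem mem_span_int_pi_basisFun_iff {x : ι → ℝ} :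
    x ∈ span ℤ (Set.range (Pi.basisFun ℝ ι)) ↔ ∃ z : ι → ℤ, x = fun i => (z i : ℝ) := by
  simp [(Pi.basisFun ℝ ι).mem_span_iff_repr_mem ℤ, funext_iff, Classical.skolem, eq_comm]

variable [DecidableEq ι]

theorem volume_preimage_toLin'_pi_Icc (A : Matrix ι ι ℝ) (hA : A.det ≠ 0) {c : ι → ℝ}
    (hc : ∀ i, 0 ≤ c i) :
    volume (Matrix.toLin' A ⁻¹' Set.univ.pi fun i => Set.Icc (-c i) (c i)) =
      ENNReal.ofReal (|A.det|⁻¹ * ∏ i, 2 * c i) := by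
  rw [Measure.addHaar_preimage_linearMap _ (by rwa [LinearMap.det_toLin']),
    LinearMap.det_toLin', abs_inv, volume_pi_pi, ENNReal.ofReal_mul (by positivity),
    ENNReal.ofReal_prod_of_nonneg fun i _ => by linarith [hc i]]
  simp only [Real.volume_Icc, sub_neg_eq_add, two_mul]

theorem Matrix.exists_ne_zero_abs_mulVec_intCast_le [Nonempty ι] (A : Matrix ι ι ℝ)
    (hA : A.det ≠ 0) (c : ι → ℝ) (hc : ∀ i, 0 < c i) (h : |A.det| ≤ ∏ i, c i) :
    ∃ z : ι → ℤ, z ≠ 0 ∧ ∀ i, |(A *ᵥ fun j => (z j : ℝ)) i| ≤ c i := by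
  set s := Matrix.toLin' A ⁻¹' Set.univ.pi fun i => Set.Icc (-c i) (c i)
  have mem_s : ∀ x, x ∈ s ↔ ∀ i, |(A *ᵥ x) i| ≤ c i := by
    simp only [s, Set.mem_preimage, Set.mem_univ_pi, Set.mem_Icc, Matrix.toLin'_apply, abs_le,
      implies_true]
  have h_symm : ∀ x ∈ s, -x ∈ s := by
    intro x
    simp only [mem_s, mulVec_neg, Pi.neg_apply, abs_neg]
    exact id
  have h_conv : Convex ℝ s :=
    (convex_pi fun i _ => convex_Icc _ _).linear_preimage _
  have h_cpt : IsCompact s := by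
    let e := (LinearMap.equivOfDetNeZero (Matrix.toLin' A) (by rwa [LinearMap.det_toLin']))
    exact e.toContinuousLinearEquiv.toHomeomorph.isCompact_preimage.2
      (isCompact_univ_pi fun _ => isCompact_Icc)
  have h_vol : volume (ZSpan.fundamentalDomain (Pi.basisFun ℝ ι)) * 2 ^ finrank ℝ (ι → ℝ) ≤
      volume s := by
    have h_box : (2 : ℝ) ^ Fintype.card ι ≤ |A.det|⁻¹ * ∏ i, 2 * c i := by
      rw [Finset.prod_mul_distrib, Finset.prod_const, Finset.card_univ, mul_left_comm,
        le_mul_iff_one_le_right (by positivity), le_inv_mul_iff₀ (abs_pos.2 hA), mul_one]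
      exact h
    calc volume (ZSpan.fundamentalDomain (Pi.basisFun ℝ ι)) * 2 ^ finrank ℝ (ι → ℝ)
        = ENNReal.ofReal (2 ^ Fintype.card ι) := by
          simp [ZSpan.fundamentalDomain_pi_basisFun, volume_pi_pi]
      _ ≤ ENNReal.ofReal (|A.det|⁻¹ * ∏ i, 2 * c i) := ENNReal.ofReal_le_ofReal h_box
      _ = volume s := (volume_preimage_toLin'_pi_Icc A hA fun i => (hc i).le).symm
  have := ZSpan.discreteTopology_pi_basisFun (ι := ι)
  have : Countable (span ℤ (Set.range (Pi.basisFun ℝ ι))).toAddSubgroup :=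
    inferInstanceAs (Countable (span ℤ (Set.range (Pi.basisFun ℝ ι))))
  obtain ⟨⟨x, hxL⟩, hx0, hxs⟩ := exists_ne_zero_mem_lattice_of_measure_mul_two_pow_le_measure
    (ZSpan.isAddFundamentalDomain' (Pi.basisFun ℝ ι) volume) h_symm h_conv h_cpt h_vol
  obtain ⟨z, rfl⟩ := mem_span_int_pi_basisFun_iff.1 hxL
  refine ⟨z, fun hz => hx0 ?_, (mem_s _).1 hxs⟩
  ext i
  simp [hz]

end LinearForms

theorem exists_int_abs_le_abs_sum_mul_sub_le {ι κ : Type*} [Fintype ι] [Fintype κ] [Nonempty ι]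
    (M : Matrix κ ι ℝ) {a : ι → ℝ} {b : κ → ℝ} (ha : ∀ j, 0 < a j) (hb : ∀ i, 0 < b i)
    (hab : 1 ≤ (∏ j, a j) * ∏ i, b i) :
    ∃ (u : ι → ℤ) (v : κ → ℤ), ¬(u = 0 ∧ v = 0) ∧ (∀ j, |(u j : ℝ)| ≤ a j) ∧
      ∀ i, |∑ j, (u j : ℝ) * M i j - v i| ≤ b i := by
  classical
  have h_det : (fromBlocks 1 0 (-M) 1 : Matrix (ι ⊕ κ) (ι ⊕ κ) ℝ).det = 1 := by simp
  obtain ⟨z, hz0, hz⟩ := (fromBlocks 1 0 (-M) 1).exists_ne_zero_abs_mulVec_intCast_le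
    (by rw [h_det]; exact one_ne_zero) (Sum.elim a b) (Sum.forall.2 ⟨ha, hb⟩)
    (by rwa [h_det, abs_one, Fintype.prod_sum_type])
  refine ⟨z ∘ Sum.inl, z ∘ Sum.inr, fun ⟨hu, hv⟩ => hz0 ?_, fun j => ?_, fun i => ?_⟩
  · ext (j | i)
    exacts [congrFun hu j, congrFun hv i]
  · simpa [fromBlocks_mulVec] using hz (Sum.inl j)
  · rw [abs_sub_comm]
    simpa [fromBlocks_mulVec, mulVec, dotProduct, one_apply, mul_comm, neg_add_eq_sub]
      using hz (Sum.inr i)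

theorem exists_nonzero_point_of_no_small_point_general (n m : ℕ) (hn : 0 < n)
    (k : Fin n → ℝ) (hksum : ∑ j, k j = 1)
    (M : Matrix (Fin m) (Fin n) ℝ) (γ : ℝ) (hγ : γ ∈ Set.Ioo (0 : ℝ) 1)
    (hzero : ∀ T : ℝ, 1 ≤ T → ∀ (u : Fin n → ℤ) (v : Fin m → ℤ),
      (∀ j : Fin n, |(u j : ℝ)| ≤ T ^ ((m : ℝ) * k j)) →
      (∀ i : Fin m, |(∑ j, (u j : ℝ) * M i j) - (v i : ℝ)| ≤ γ * T⁻¹) →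
      u = 0 ∧ v = 0) :
    ∀ T : ℝ, 1 ≤ T → ∃ (u : Fin n → ℤ) (v : Fin m → ℤ), u ≠ 0 ∧
      T ^ ((m : ℝ) * k ⟨0, hn⟩) < |(u ⟨0, hn⟩ : ℝ)| ∧
      |(u ⟨0, hn⟩ : ℝ)| ≤ γ ^ (-(m : ℝ)) * T ^ ((m : ℝ) * k ⟨0, hn⟩) ∧
      (∀ j : Fin n, j ≠ ⟨0, hn⟩ → |(u j : ℝ)| ≤ T ^ ((m : ℝ) * k j)) ∧
      (∀ i : Fin m, |(∑ j, (u j : ℝ) * M i j) - (v i : ℝ)| ≤ γ * T⁻¹) := by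
  intro T hT
  have hγ₀ : 0 < γ := hγ.1
  have hT₀ : 0 < T := one_pos.trans_le hT
  have : Nonempty (Fin n) := ⟨⟨0, hn⟩⟩
  set j₀ : Fin n := ⟨0, hn⟩
  set a : Fin n → ℝ := fun j => (if j = j₀ then γ ^ (-(m : ℝ)) else 1) * T ^ ((m : ℝ) * k j)
  have h_vol : (∏ j, a j) * ∏ _i : Fin m, γ * T⁻¹ = 1 := by
    rw [Finset.prod_mul_distrib, Finset.prod_ite_eq', if_pos (Finset.mem_univ _),
      ← Real.rpow_sum_of_pos hT₀, ← Finset.mul_sum, hksum, mul_one, Real.rpow_natCast,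
      Finset.prod_const, Finset.card_univ,
      Fintype.card_fin, Real.rpow_neg hγ₀.le, Real.rpow_natCast, mul_pow, inv_pow]
    field_simp
  obtain ⟨u, v, huv, hu, hv⟩ := exists_int_abs_le_abs_sum_mul_sub_le M
    (a := a) (fun j => by positivity) (fun _ => by positivity) h_vol.ge
  have hu_ne : ∀ j ≠ j₀, |(u j : ℝ)| ≤ T ^ ((m : ℝ) * k j) := fun j hj => by
    simpa [a, hj] using hu j
  have hu₀ : T ^ ((m : ℝ) * k j₀) < |(u j₀ : ℝ)| := by
    by_contra! h
    exact huv (hzero T hT u v (fun j => if hj : j = j₀ then hj ▸ h else hu_ne j hj) hv)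
  refine ⟨u, v, fun h => ?_, hu₀, by simpa [a] using hu j₀, hu_ne, hv⟩
  simp only [h, Pi.zero_apply, Int.cast_zero, abs_zero] at hu₀
  exact hu₀.not_ge (by positivity)

/-- If for every `T ≥ 1` the only integer point `(u,v)` with
`|u_j| ≤ T^{m k_j}` for all `j` and `max_i |M_i(u) − v_i| ≤ γ T⁻¹` is the zero
vector, then for every `T ≥ 1` there is an integer point `(u,v)` with `u ≠ 0`,
`T^{m k₁} < |u₁| ≤ γ⁻ᵐ T^{m k₁}`, `|u_j| ≤ T^{m k_j}` for `j ≥ 2`, and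
`max_i |M_i(u) − v_i| ≤ γ T⁻¹`. -/
theorem exists_nonzero_point_of_no_small_point (n m : ℕ) (hn : 0 < n) (hm : 0 < m)
    (k : Fin n → ℝ) (hk : ∀ j, 0 < k j) (hksum : ∑ j, k j = 1)
    (M : Matrix (Fin m) (Fin n) ℝ) (γ : ℝ) (hγ : γ ∈ Set.Ioo (0 : ℝ) 1)
    (hzero : ∀ T : ℝ, 1 ≤ T → ∀ (u : Fin n → ℤ) (v : Fin m → ℤ),
      (∀ j : Fin n, |(u j : ℝ)| ≤ T ^ ((m : ℝ) * k j)) →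
      (∀ i : Fin m, |(∑ j, (u j : ℝ) * M i j) - (v i : ℝ)| ≤ γ * T⁻¹) →
      u = 0 ∧ v = 0) :
    ∀ T : ℝ, 1 ≤ T → ∃ (u : Fin n → ℤ) (v : Fin m → ℤ), u ≠ 0 ∧
      T ^ ((m : ℝ) * k ⟨0, hn⟩) < |(u ⟨0, hn⟩ : ℝ)| ∧
      |(u ⟨0, hn⟩ : ℝ)| ≤ γ ^ (-(m : ℝ)) * T ^ ((m : ℝ) * k ⟨0, hn⟩) ∧
      (∀ j : Fin n, j ≠ ⟨0, hn⟩ → |(u j : ℝ)| ≤ T ^ ((m : ℝ) * k j)) ∧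
      (∀ i : Fin m, |(∑ j, (u j : ℝ) * M i j) - (v i : ℝ)| ≤ γ * T⁻¹) :=
  exists_nonzero_point_of_no_small_point_general n m hn k hksum M γ hγ hzero
end

section
/- Let n, m ≥ 1 be integers, let k = (k_1,…,k_n) be a weight vector with k_1 = max_{1≤j≤n} k_j, let M be an m×n real matrix with forms M_i, and let γ ∈ (0,1) be such that inf_{u ∈ ℤ^n, u ≠ 0} max_{1≤i≤m} ( max_{1≤j≤n} |u_j|^{1/(m k_j)} ) ‖M_i(u)‖ ≥ γ. Set R = ⌈γ^{−1/k_1}⌉ + 1 and T_r = R^r for r = 0, 1, 2, …. Then there exist sequences of vectors u_r ∈ ℤ^n and v_r ∈ ℤ^m such that, writing φ_r = max_{1≤i≤m} |M_i(u_r) − v_i(r)|, for every r ≥ 0: (i) T_r^{m k_1} < |u_1(r)| ≤ γ^{−m} T_r^{m k_1}; (ii) |u_j(r)| ≤ T_r^{m k_j} for 2 ≤ j ≤ n; (iii) γ^{1+1/k_1} T_r^{−1} ≤ φ_r ≤ γ T_r^{−1}; (iv) φ_{r+1} < φ_r; and (v) φ_r → 0 as r → ∞. Moreover φ_r ≤ γ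 R T_{r+1}^{−1} and max_{1≤i≤m} ‖M_i(u_r)‖ = φ_r for every r. -/
open Filter

/-!
At every scale `T ≥ 1`, Minkowski's theorem applied to the region `|u_j| ≤ B_j`,
`|M_i(u) - v_i| < γ / T` (a box of volume `2^(n+m)` after a unimodular shear), where
`B_1 = γ^(-m) T^(m k_1)` and `B_j = T^(m k_j)` for `j ≥ 2`, gives a nonzero `u` with
`max_i ‖M_i(u)‖ < γ / T`. In the badly approximable condition `γ ≤ H(u) · max_i ‖M_i(u)‖`, where
`H(u) = max_j |u_j|^(1/(m k_j))`, this forces `H(u) > T`, and only the first coordinate can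
contribute that much, so `|u_1| > T^(m k_1)`; conversely `H(u) ≤ γ^(-1/k_1) T` gives
`max_i ‖M_i(u)‖ ≥ γ^(1+1/k_1) / T`. For `T = R^r` with `R > γ^(-1/k_1)` the upper bound at
scale `r + 1` lies below the lower bound at scale `r`, so the errors decrease strictly to `0`.
-/

open MeasureTheory

theorem exists_ne_zero_int_mem_of_two_pow_card_lt_volume {ι : Type*} [Fintype ι]
    {s : Set (ι → ℝ)} (h_symm : ∀ x ∈ s, -x ∈ s) (h_conv : Convex ℝ s)
    (h : 2 ^ Fintype.card ι < volume s) :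
    ∃ z : ι → ℤ, z ≠ 0 ∧ (fun i ↦ (z i : ℝ)) ∈ s := by
  let e := Pi.basisFun ℝ ι
  have hF : volume (ZSpan.fundamentalDomain e) = 1 := by
    simp [e, ZSpan.fundamentalDomain_pi_basisFun, volume_pi_pi]
  have : Countable (Submodule.span ℤ (Set.range e)).toAddSubgroup :=
    inferInstanceAs (Countable (Submodule.span ℤ (Set.range e)))
  obtain ⟨x, hx0, hxs⟩ := exists_ne_zero_mem_lattice_of_measure_mul_two_pow_lt_measure
    (ZSpan.isAddFundamentalDomain' e volume) h_symm h_conv (by simpa [hF] using h)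
  have hint : ∀ i, ∃ z : ℤ, (z : ℝ) = (x : ι → ℝ) i := fun i ↦ by
    simpa [e] using (e.mem_span_iff_repr_mem ℤ _).mp x.2 i
  choose z hz using hint
  have hxz : (x : ι → ℝ) = fun i ↦ (z i : ℝ) := funext fun i ↦ (hz i).symm
  refine ⟨z, fun hz0 ↦ hx0 ?_, hxz ▸ hxs⟩
  ext i
  simp [hxz, hz0]

theorem volume_preimage_shear {ι κ : Type*} [Fintype ι] [Fintype κ] [DecidableEq ι]
    [DecidableEq κ] (M : Matrix κ ι ℝ) (s : Set (ι ⊕ κ → ℝ)) :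
    volume (Matrix.toLin' (Matrix.fromBlocks 1 0 M 1 : Matrix (ι ⊕ κ) (ι ⊕ κ) ℝ) ⁻¹' s) =
      volume s := by
  have hdet : LinearMap.det
      (Matrix.toLin' (Matrix.fromBlocks 1 0 M 1 : Matrix (ι ⊕ κ) (ι ⊕ κ) ℝ)) = 1 := by
    simp
  simp [Measure.addHaar_preimage_linearMap _ (hdet ▸ one_ne_zero), hdet]

section Dirichlet

variable {ι κ : Type*} [Fintype ι] [Fintype κ]

theorem exists_ne_zero_int_abs_lt_and_dni_lt (M : Matrix κ ι ℝ) {b : ι → ℝ} {δ : ℝ}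
    (hb : ∀ j, 0 < b j) (hδ : 0 < δ) (hδ1 : δ ≤ 1)
    (hvol : 1 < (∏ j, b j) * δ ^ Fintype.card κ) :
    ∃ u : ι → ℤ, u ≠ 0 ∧ (∀ j, |(u j : ℝ)| < b j) ∧ ∀ i, dni (∑ j, (u j : ℝ) * M i j) < δ := by
  classical
  let c : ι ⊕ κ → ℝ := Sum.elim b fun _ ↦ δ
  let box : Set (ι ⊕ κ → ℝ) := Set.pi Set.univ fun a ↦ Set.Ioo (-c a) (c a)
  let shear := Matrix.toLin' (Matrix.fromBlocks 1 0 M 1 : Matrix (ι ⊕ κ) (ι ⊕ κ) ℝ)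
  let s : Set (ι ⊕ κ → ℝ) := {x | (∀ j, |x (.inl j)| < b j) ∧
    ∀ i, |∑ j, x (.inl j) * M i j + x (.inr i)| < δ}
  have hs : s = shear ⁻¹' box := by
    ext x
    simp [s, box, c, shear, Matrix.fromBlocks_mulVec, Matrix.mulVec, dotProduct, mul_comm, abs_lt]
  have hvol_box : 2 ^ Fintype.card (ι ⊕ κ) < volume box := by
    have hc : ∀ a, 0 ≤ c a - -c a := by rintro (j | i) <;> simp [c, (hb _).le, hδ.le]
    have hprod : ∏ a, (c a - -c a) =
        2 ^ Fintype.card (ι ⊕ κ) * ((∏ j, b j) * δ ^ Fintype.card κ) := by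
      simp [c, Fintype.prod_sum_type, Finset.prod_mul_distrib, pow_add, ← two_mul]
    rw [Real.volume_pi_Ioo, ← ENNReal.ofReal_prod_of_nonneg fun a _ ↦ hc a, hprod,
      show (2 : ENNReal) ^ Fintype.card (ι ⊕ κ) = ENNReal.ofReal (2 ^ Fintype.card (ι ⊕ κ)) by
        simp,
      ENNReal.ofReal_lt_ofReal_iff (by positivity)]
    exact lt_mul_of_one_lt_right (by positivity) hvol
  have h_symm : ∀ x ∈ s, -x ∈ s := fun x hx ↦ by
    refine ⟨fun j ↦ ?_, fun i ↦ ?_⟩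
    · simpa only [Pi.neg_apply, abs_neg] using hx.1 j
    · simpa only [Pi.neg_apply, neg_mul, Finset.sum_neg_distrib, ← neg_add, abs_neg] using hx.2 i
  obtain ⟨z, hz0, hzs⟩ := exists_ne_zero_int_mem_of_two_pow_card_lt_volume h_symm
    (hs ▸ (convex_pi fun a _ ↦ convex_Ioo _ _).linear_preimage shear)
    (by rwa [hs, volume_preimage_shear])
  refine ⟨fun j ↦ z (.inl j), fun hu ↦ hz0 ?_, hzs.1, fun i ↦ ?_⟩
  · have hw : ∀ i, z (.inr i) = 0 := fun i ↦ by
      have h := hzs.2 i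
      simp only [congrFun hu, Pi.zero_apply, Int.cast_zero, zero_mul, Finset.sum_const_zero,
        zero_add] at h
      exact_mod_cast Int.abs_lt_one_iff.mp (by exact_mod_cast h.trans_le hδ1)
    ext (j | i)
    · exact congrFun hu j
    · exact hw i
  · calc dni _ ≤ |∑ j, (z (.inl j) : ℝ) * M i j - ((-z (.inr i) : ℤ) : ℝ)| := round_le _ _
      _ < δ := by simpa [sub_eq_add_neg] using hzs.2 i

theorem exists_ne_zero_int_abs_le_and_dni_lt [Nonempty ι] (M : Matrix κ ι ℝ) {B : ι → ℝ}
    {δ : ℝ} (hB : ∀ j, 0 < B j) (hδ : 0 < δ) (hδ1 : δ ≤ 1)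
    (hvol : 1 ≤ (∏ j, B j) * δ ^ Fintype.card κ) :
    ∃ u : ι → ℤ, u ≠ 0 ∧ (∀ j, |(u j : ℝ)| ≤ B j) ∧ ∀ i, dni (∑ j, (u j : ℝ) * M i j) < δ := by
  -- Enlarging `B j` to `⌊B j⌋ + 1` makes the volume bound strict and adds no integer points.
  have hBb : ∀ j, B j < ⌊B j⌋ + 1 := fun j ↦ Int.lt_floor_add_one (B j)
  obtain ⟨u, hu0, hub, hdni⟩ := exists_ne_zero_int_abs_lt_and_dni_lt M
    (fun j ↦ (hB j).trans (hBb j)) hδ hδ1 <| hvol.trans_lt <| mul_lt_mul_of_pos_right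
      (Finset.prod_lt_prod_of_nonempty (fun j _ ↦ hB j) (fun j _ ↦ hBb j) Finset.univ_nonempty)
      (by positivity)
  refine ⟨u, hu0, fun j ↦ ?_, hdni⟩
  have h : |u j| < ⌊B j⌋ + 1 := by exact_mod_cast hub j
  exact_mod_cast Int.le_floor.mp (Int.lt_add_one_iff.mp h)

end Dirichlet
section WeightedHeight

variable {ι : Type*}

noncomputable def weightedHeight (m : ℕ) (k : ι → ℝ) (u : ι → ℤ) : ℝ :=
  ⨆ j, |(u j : ℝ)| ^ (1 / ((m : ℝ) * k j))

variable {m : ℕ} {k : ι → ℝ} {u : ι → ℤ} {S : ℝ}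

theorem weightedHeight_nonneg : 0 ≤ weightedHeight m k u :=
  Real.iSup_nonneg fun _ ↦ by positivity

theorem weightedHeight_le (hmk : ∀ j, 0 < (m : ℝ) * k j) (hS : 0 ≤ S)
    (h : ∀ j, |(u j : ℝ)| ≤ S ^ ((m : ℝ) * k j)) : weightedHeight m k u ≤ S :=
  Real.iSup_le (fun j ↦ by
    rw [one_div, Real.rpow_inv_le_iff_of_pos (abs_nonneg _) hS (hmk j)]
    exact h j) hS

theorem rpow_lt_abs_of_lt_weightedHeight (hmk : ∀ j, 0 < (m : ℝ) * k j) (hS : 0 ≤ S) (j₀ : ι)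
    (h : ∀ j ≠ j₀, |(u j : ℝ)| ≤ S ^ ((m : ℝ) * k j)) (hlt : S < weightedHeight m k u) :
    S ^ ((m : ℝ) * k j₀) < |(u j₀ : ℝ)| := by
  by_contra! h₀
  refine hlt.not_ge (weightedHeight_le hmk hS fun j ↦ ?_)
  by_cases hj : j = j₀
  · exact hj ▸ h₀
  · exact h j hj

end WeightedHeight

section Scale

variable {ι κ : Type*} [Fintype ι] [Fintype κ]

noncomputable def maxDni (M : Matrix κ ι ℝ) (u : ι → ℤ) : ℝ :=
  ⨆ i, dni (∑ j, (u j : ℝ) * M i j)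

theorem dni_le_maxDni (M : Matrix κ ι ℝ) (u : ι → ℤ) (i : κ) :
    dni (∑ j, (u j : ℝ) * M i j) ≤ maxDni M u :=
  le_ciSup (f := fun i ↦ dni (∑ j, (u j : ℝ) * M i j)) (Set.finite_range _).bddAbove i

theorem maxDni_lt [Nonempty κ] {M : Matrix κ ι ℝ} {u : ι → ℤ} {δ : ℝ}
    (h : ∀ i, dni (∑ j, (u j : ℝ) * M i j) < δ) : maxDni M u < δ := by
  obtain ⟨i, hi⟩ := exists_eq_ciSup_of_finite (f := fun i ↦ dni (∑ j, (u j : ℝ) * M i j))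
  rw [maxDni, ← hi]
  exact h i

variable {k : ι → ℝ} {M : Matrix κ ι ℝ} {γ : ℝ}

theorem exists_ne_zero_int_mem_weighted_box (M : Matrix κ ι ℝ) (hksum : ∑ j, k j = 1)
    (hγ0 : 0 < γ) (hγ1 : γ ≤ 1) (j₀ : ι) {T : ℝ} (hT : 1 ≤ T) :
    ∃ u : ι → ℤ, u ≠ 0 ∧
      |(u j₀ : ℝ)| ≤ γ ^ (-(Fintype.card κ : ℝ)) * T ^ ((Fintype.card κ : ℝ) * k j₀) ∧
      (∀ j, j ≠ j₀ → |(u j : ℝ)| ≤ T ^ ((Fintype.card κ : ℝ) * k j)) ∧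
      ∀ i, dni (∑ j, (u j : ℝ) * M i j) < γ / T := by
  classical
  set m := Fintype.card κ
  have : Nonempty ι := ⟨j₀⟩
  have hT0 : 0 < T := one_pos.trans_le hT
  set B : ι → ℝ := fun j ↦ (if j = j₀ then γ ^ (-(m : ℝ)) else 1) * T ^ ((m : ℝ) * k j)
  have hB : ∀ j, 0 < B j := fun j ↦ by
    by_cases hj : j = j₀ <;> simp only [B, hj, if_true, if_false] <;> positivity
  have hvol : (∏ j, B j) * (γ / T) ^ m = 1 := by
    rw [Finset.prod_mul_distrib, Finset.prod_ite_eq', ← Real.rpow_sum_of_pos hT0,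
      ← Finset.mul_sum, hksum, mul_one]
    simp only [Finset.mem_univ, if_true, Real.rpow_neg hγ0.le, Real.rpow_natCast, div_pow]
    field_simp
  obtain ⟨u, hu0, hub, hdni⟩ := exists_ne_zero_int_abs_le_and_dni_lt M hB (div_pos hγ0 hT0)
    ((div_le_one hT0).mpr (hγ1.trans hT)) hvol.ge
  exact ⟨u, hu0, by simpa [B] using hub j₀, fun j hj ↦ by simpa [B, hj] using hub j, hdni⟩

theorem exists_approx_at_scale (hk : ∀ j, 0 < k j) (hksum : ∑ j, k j = 1) (hγ0 : 0 < γ)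
    (hγ1 : γ ≤ 1)
    (hbad : ∀ u : ι → ℤ, u ≠ 0 → ∃ i,
      γ ≤ weightedHeight (Fintype.card κ) k u * dni (∑ j, (u j : ℝ) * M i j))
    (j₀ : ι) {T : ℝ} (hT : 1 ≤ T) :
    ∃ u : ι → ℤ,
      (T ^ ((Fintype.card κ : ℝ) * k j₀) < |(u j₀ : ℝ)| ∧
        |(u j₀ : ℝ)| ≤ γ ^ (-(Fintype.card κ : ℝ)) * T ^ ((Fintype.card κ : ℝ) * k j₀)) ∧
      (∀ j, j ≠ j₀ → |(u j : ℝ)| ≤ T ^ ((Fintype.card κ : ℝ) * k j)) ∧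
      γ ^ (1 + 1 / k j₀) * T⁻¹ ≤ maxDni M u ∧ maxDni M u ≤ γ * T⁻¹ := by
  set m := Fintype.card κ
  have hT0 : 0 < T := one_pos.trans_le hT
  obtain ⟨u, hu0, hu₀, huj, hdni⟩ :=
    exists_ne_zero_int_mem_weighted_box M hksum hγ0 hγ1 j₀ hT
  obtain ⟨i₁, hi₁⟩ := hbad u hu0
  have : Nonempty κ := ⟨i₁⟩
  have hmk : ∀ j, 0 < (m : ℝ) * k j := fun j ↦ mul_pos (by simp [m, Fintype.card_pos]) (hk j)
  have hΦlt : maxDni M u < γ / T := maxDni_lt hdni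
  have hΦ0 : 0 ≤ maxDni M u := (abs_nonneg _).trans (dni_le_maxDni M u i₁)
  have hγW : γ ≤ weightedHeight m k u * maxDni M u :=
    hi₁.trans (mul_le_mul_of_nonneg_left (dni_le_maxDni M u i₁) weightedHeight_nonneg)
  have hγk : 1 ≤ γ ^ (-(1 / k j₀)) :=
    Real.one_le_rpow_of_pos_of_le_one_of_nonpos hγ0 hγ1 (by simp [(hk j₀).le])
  have hW : weightedHeight m k u ≤ γ ^ (-(1 / k j₀)) * T := by
    refine weightedHeight_le hmk (by positivity) fun j ↦ ?_
    by_cases hj : j = j₀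
    · subst hj
      rwa [Real.mul_rpow (by positivity) hT0.le, ← Real.rpow_mul hγ0.le,
        show -(1 / k j) * (m * k j) = -(m : ℝ) by field_simp [(hk j).ne']]
    · exact (huj j hj).trans (Real.rpow_le_rpow hT0.le (le_mul_of_one_le_left hT0.le hγk)
        (hmk j).le)
  have hTW : T < weightedHeight m k u := by
    by_contra! h
    have : T * maxDni M u < γ := by rwa [lt_div_iff₀' hT0] at hΦlt
    linarith [mul_le_mul_of_nonneg_right h hΦ0]
  refine ⟨u, ⟨rpow_lt_abs_of_lt_weightedHeight hmk hT0.le j₀ huj hTW, hu₀⟩, huj, ?_,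
    hΦlt.le.trans_eq (div_eq_mul_inv _ _)⟩
  rw [show 1 + 1 / k j₀ = 1 - -(1 / k j₀) by ring, Real.rpow_sub hγ0, Real.rpow_one,
    ← div_eq_mul_inv, div_div, div_le_iff₀ (by positivity)]
  linarith [hγW.trans (mul_le_mul_of_nonneg_right hW hΦ0)]

end Scale

theorem strictAnti_of_geometric_bounds {φ : ℕ → ℝ} {c C R : ℝ} (hR : 0 < R)
    (hlo : ∀ r, c * (R ^ r)⁻¹ ≤ φ r) (hhi : ∀ r, φ r ≤ C * (R ^ r)⁻¹) (hCc : C < c * R) :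
    StrictAnti φ :=
  strictAnti_nat_of_succ_lt fun r ↦ calc
    φ (r + 1) ≤ C * (R ^ (r + 1))⁻¹ := hhi (r + 1)
    _ < c * R * (R ^ (r + 1))⁻¹ := by gcongr
    _ = c * (R ^ r)⁻¹ := by rw [pow_succ]; field_simp
    _ ≤ φ r := hlo r

theorem tendsto_zero_of_geometric_bounds {φ : ℕ → ℝ} {C R : ℝ} (hR : 1 < R)
    (h0 : ∀ r, 0 ≤ φ r) (hhi : ∀ r, φ r ≤ C * (R ^ r)⁻¹) : Tendsto φ atTop (nhds 0) := by
  refine squeeze_zero h0 hhi ?_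
  simpa using (tendsto_inv_atTop_zero.comp (tendsto_pow_atTop_atTop_of_one_lt hR)).const_mul C

theorem exists_best_approx_sequence_general (n m : ℕ) (hn : 0 < n)
    (k : Fin n → ℝ) (hk : ∀ j, 0 < k j) (hksum : ∑ j, k j = 1)
    (M : Matrix (Fin m) (Fin n) ℝ) (γ : ℝ) (hγ : γ ∈ Set.Ioo (0 : ℝ) 1)
    (hbad : ∀ u : Fin n → ℤ, u ≠ 0 → ∃ i : Fin m,
      γ ≤ (⨆ j, |(u j : ℝ)| ^ (1 / ((m : ℝ) * k j))) * dni (∑ j, (u j : ℝ) * M i j))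
    (R : ℕ) (hR : R = ⌈γ ^ (-(1 / k ⟨0, hn⟩))⌉₊ + 1) :
    ∃ (u : ℕ → Fin n → ℤ) (v : ℕ → Fin m → ℤ) (φ : ℕ → ℝ),
      (∀ r : ℕ, φ r = ⨆ i, |(∑ j, (u r j : ℝ) * M i j) - (v r i : ℝ)|) ∧
      (∀ r : ℕ,
        ((R : ℝ) ^ r) ^ ((m : ℝ) * k ⟨0, hn⟩) < |(u r ⟨0, hn⟩ : ℝ)| ∧
        |(u r ⟨0, hn⟩ : ℝ)| ≤ γ ^ (-(m : ℝ)) * ((R : ℝ) ^ r) ^ ((m : ℝ) * k ⟨0, hn⟩)) ∧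
      (∀ r : ℕ, ∀ j : Fin n, j ≠ ⟨0, hn⟩ →
        |(u r j : ℝ)| ≤ ((R : ℝ) ^ r) ^ ((m : ℝ) * k j)) ∧
      (∀ r : ℕ,
        γ ^ (1 + 1 / k ⟨0, hn⟩) * ((R : ℝ) ^ r)⁻¹ ≤ φ r ∧ φ r ≤ γ * ((R : ℝ) ^ r)⁻¹) ∧
      (∀ r : ℕ, φ (r + 1) < φ r) ∧
      Tendsto φ atTop (nhds 0) ∧
      (∀ r : ℕ, φ r ≤ γ * (R : ℝ) * ((R : ℝ) ^ (r + 1))⁻¹) ∧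
      (∀ r : ℕ, (⨆ i, dni (∑ j, (u r j : ℝ) * M i j)) = φ r) := by
  obtain ⟨hγ0, hγ1⟩ := hγ
  set j₀ : Fin n := ⟨0, hn⟩
  have hγR : γ ^ (-(1 / k j₀)) < R := by
    rw [hR]; push_cast; linarith [Nat.le_ceil (γ ^ (-(1 / k j₀)))]
  have hR1 : 1 < (R : ℝ) := (Real.one_le_rpow_of_pos_of_le_one_of_nonpos hγ0 hγ1.le
    (by simp [(hk j₀).le])).trans_lt hγR
  have hbad' : ∀ u : Fin n → ℤ, u ≠ 0 → ∃ i : Fin m,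
      γ ≤ weightedHeight (Fintype.card (Fin m)) k u * dni (∑ j, (u j : ℝ) * M i j) := by
    simpa only [weightedHeight, Fintype.card_fin] using hbad
  choose u hu using fun r : ℕ ↦
    exists_approx_at_scale hk hksum hγ0 hγ1.le hbad' j₀ (one_le_pow₀ hR1.le)
  simp only [Fintype.card_fin] at hu
  have hlo : ∀ r, γ ^ (1 + 1 / k j₀) * ((R : ℝ) ^ r)⁻¹ ≤ maxDni M (u r) := fun r ↦ (hu r).2.2.1
  have hhi : ∀ r, maxDni M (u r) ≤ γ * ((R : ℝ) ^ r)⁻¹ := fun r ↦ (hu r).2.2.2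
  have hγ_lt : γ < γ ^ (1 + 1 / k j₀) * R := by
    rw [Real.rpow_add hγ0, Real.rpow_one, mul_assoc]
    refine lt_mul_of_one_lt_right hγ0 ?_
    rwa [← inv_lt_iff_one_lt_mul₀' (by positivity), ← Real.rpow_neg hγ0.le]
  refine ⟨u, fun r i ↦ round (∑ j, (u r j : ℝ) * M i j), fun r ↦ maxDni M (u r),
    fun r ↦ by dsimp only; rw [maxDni]; rfl,
    fun r ↦ (hu r).1, fun r ↦ (hu r).2.1, fun r ↦ (hu r).2.2,
    fun r ↦ strictAnti_of_geometric_bounds (by positivity) hlo hhi hγ_lt (Nat.lt_succ_self r),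
    tendsto_zero_of_geometric_bounds hR1 (fun r ↦ (hlo r).trans' (by positivity)) hhi,
    fun r ↦ (hhi r).trans_eq ?_, fun r ↦ by dsimp only; rw [maxDni]⟩
  rw [pow_succ]
  field_simp

/-- Under the dual badly-approximable assumption on `M` with
constant `γ`, setting `R = ⌈γ^{−1/k₁}⌉ + 1` and `T_r = R^r`, there exist
sequences of best approximation vectors `u_r ∈ ℤⁿ`, `v_r ∈ ℤᵐ` with
`φ_r = max_i |M_i(u_r) − v_i(r)|` satisfying (i)–(v) and the extra bounds. -/
theorem exists_best_approx_sequence (n m : ℕ) (hn : 0 < n) (hm : 0 < m)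
    (k : Fin n → ℝ) (hk : ∀ j, 0 < k j) (hksum : ∑ j, k j = 1)
    (hk1 : ∀ j, k j ≤ k ⟨0, hn⟩)
    (M : Matrix (Fin m) (Fin n) ℝ) (γ : ℝ) (hγ : γ ∈ Set.Ioo (0 : ℝ) 1)
    (hbad : ∀ u : Fin n → ℤ, u ≠ 0 → ∃ i : Fin m,
      γ ≤ (⨆ j, |(u j : ℝ)| ^ (1 / ((m : ℝ) * k j))) * dni (∑ j, (u j : ℝ) * M i j))
    (R : ℕ) (hR : R = ⌈γ ^ (-(1 / k ⟨0, hn⟩))⌉₊ + 1) :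
    ∃ (u : ℕ → Fin n → ℤ) (v : ℕ → Fin m → ℤ) (φ : ℕ → ℝ),
      (∀ r : ℕ, φ r = ⨆ i, |(∑ j, (u r j : ℝ) * M i j) - (v r i : ℝ)|) ∧
      (∀ r : ℕ,
        ((R : ℝ) ^ r) ^ ((m : ℝ) * k ⟨0, hn⟩) < |(u r ⟨0, hn⟩ : ℝ)| ∧
        |(u r ⟨0, hn⟩ : ℝ)| ≤ γ ^ (-(m : ℝ)) * ((R : ℝ) ^ r) ^ ((m : ℝ) * k ⟨0, hn⟩)) ∧
      (∀ r : ℕ, ∀ j : Fin n, j ≠ ⟨0, hn⟩ →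
        |(u r j : ℝ)| ≤ ((R : ℝ) ^ r) ^ ((m : ℝ) * k j)) ∧
      (∀ r : ℕ,
        γ ^ (1 + 1 / k ⟨0, hn⟩) * ((R : ℝ) ^ r)⁻¹ ≤ φ r ∧ φ r ≤ γ * ((R : ℝ) ^ r)⁻¹) ∧
      (∀ r : ℕ, φ (r + 1) < φ r) ∧
      Tendsto φ atTop (nhds 0) ∧
      (∀ r : ℕ, φ r ≤ γ * (R : ℝ) * ((R : ℝ) ^ (r + 1))⁻¹) ∧
      (∀ r : ℕ, (⨆ i, dni (∑ j, (u r j : ℝ) * M i j)) = φ r) :=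
  exists_best_approx_sequence_general n m hn k hk hksum M γ hγ hbad R hR
end
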